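/- For every real number z > 0 that is not an integer, with n = ⌊z⌋, the integration-by-parts reduction formula holds: ∫₀^∞ (e^{−x} − e_n(−x)) · x^{−z−1} dx = −(1/z) · ∫₀^∞ (e^{−x} − e_{n−1}(−x)) · x^{−z} dx, where both integrals converge. -/

import Mathlib

/-
Write `R_m(x) = e^{-x} - e_{m-1}(-x)` (`negExpRemainder m`), so that `R_{m+1}' = -R_m`. On `(0, 1]`
the Taylor bound gives `|R_m(x)| ≤ 2 x^m`, and on `[1, ∞)` every term of `R_m` is bounded in
absolute value by `x^{m-1}`. Hence `R_m(x) x^w` is integrable on `(0, ∞)` when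
`m - 1 + w < -1 < m + w`, and tends to `0` at both ends when `m - 1 + w < 0 < m + w`. Since `n < z < n + 1`, both integrals converge, and integrating
`R_{n+1}(x) x^{-z-1}` by parts against `v(x) = -x^{-z}/z` has vanishing boundary terms.
-/

open MeasureTheory Real Filter Set

/-- Truncated exponential polynomial `e_n(x) = ∑_{k=0}^{n} x^k / k!`.
Note that `e_{n-1}(x)` corresponds to `∑ k in Finset.range n, x^k / k!`. -/
noncomputable def truncExp (n : ℕ) (x : ℝ) : ℝ :=
  ∑ k ∈ Finset.range (n + 1), x ^ k / (k.factorial : ℝ)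

noncomputable def truncExpPrev (n : ℕ) (x : ℝ) : ℝ :=
  ∑ k ∈ Finset.range n, x ^ k / (k.factorial : ℝ)

open Topology

noncomputable def negExpRemainder (m : ℕ) (x : ℝ) : ℝ :=
  Real.exp (-x) - truncExpPrev m (-x)

lemma continuous_negExpRemainder (m : ℕ) : Continuous (negExpRemainder m) := by
  unfold negExpRemainder truncExpPrev
  fun_prop

lemma hasDerivAt_truncExpPrev_succ (m : ℕ) (x : ℝ) :
    HasDerivAt (truncExpPrev (m + 1)) (truncExpPrev m x) x := by
  induction m with
  | zero =>
    have h : truncExpPrev 1 = fun _ => 1 := by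
      funext y
      simp [truncExpPrev]
    simpa [h, truncExpPrev] using hasDerivAt_const x (1 : ℝ)
  | succ m ih =>
    have hfun : truncExpPrev (m + 2) =
        fun y => truncExpPrev (m + 1) y + y ^ (m + 1) / ((m + 1).factorial : ℝ) := by
      funext y
      simp only [truncExpPrev, Finset.sum_range_succ _ (m + 1)]
    have hval : truncExpPrev (m + 1) x =
        truncExpPrev m x + ((m + 1 : ℕ) * x ^ m) / ((m + 1).factorial : ℝ) := by
      rw [truncExpPrev, Finset.sum_range_succ, ← truncExpPrev, Nat.factorial_succ]
      push_cast
      field_simp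
    rw [hfun, hval]
    exact ih.add ((hasDerivAt_pow (m + 1) x).div_const _)

lemma hasDerivAt_negExpRemainder_succ (m : ℕ) (x : ℝ) :
    HasDerivAt (negExpRemainder (m + 1)) (-negExpRemainder m x) x := by
  have h := ((Real.hasDerivAt_exp (-x)).comp x (hasDerivAt_neg x)).sub
    ((hasDerivAt_truncExpPrev_succ m (-x)).comp x (hasDerivAt_neg x))
  rw [show -negExpRemainder m x = Real.exp (-x) * -1 - truncExpPrev m (-x) * -1 by
    rw [negExpRemainder]; ring]
  exact h

lemma abs_negExpRemainder_le_of_le_one (m : ℕ) {x : ℝ} (hx0 : 0 ≤ x) (hx1 : x ≤ 1) :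
    |negExpRemainder m x| ≤ 2 * x ^ m := by
  rcases Nat.eq_zero_or_pos m with rfl | hm
  · simp only [negExpRemainder, truncExpPrev, Finset.range_zero, Finset.sum_empty, sub_zero,
      pow_zero, abs_of_pos (Real.exp_pos _)]
    linarith [Real.exp_le_one_iff.mpr (neg_nonpos.mpr hx0)]
  · have habs : |-x| = x := by rw [abs_neg, abs_of_nonneg hx0]
    have htaylor := Real.exp_bound (habs.le.trans hx1) hm
    rw [habs] at htaylor
    have hconst : ((m.succ : ℕ) : ℝ) / (m.factorial * m) ≤ 2 := by
      have hfac : (1 : ℝ) ≤ m.factorial := by exact_mod_cast m.factorial_pos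
      have hm' : (1 : ℝ) ≤ m := by exact_mod_cast hm
      rw [div_le_iff₀ (by positivity)]
      push_cast
      nlinarith
    calc |negExpRemainder m x| ≤ x ^ m * (((m.succ : ℕ) : ℝ) / (m.factorial * m)) := htaylor
      _ ≤ x ^ m * 2 := by gcongr
      _ = 2 * x ^ m := mul_comm _ _

lemma abs_negExpRemainder_le_of_one_le (m : ℕ) {x : ℝ} (hx : 1 ≤ x) :
    |negExpRemainder m x| ≤ (m + 1) * x ^ ((m : ℝ) - 1) := by
  have hx0 : 0 < x := one_pos.trans_le hx
  have hexp : Real.exp (-x) ≤ x ^ ((m : ℝ) - 1) := calc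
    Real.exp (-x) ≤ x⁻¹ := by
      rw [Real.exp_neg]
      exact inv_anti₀ hx0 (by linarith [Real.add_one_le_exp x])
    _ = x ^ (-1 : ℝ) := (Real.rpow_neg_one x).symm
    _ ≤ x ^ ((m : ℝ) - 1) :=
      Real.rpow_le_rpow_of_exponent_le hx (by linarith [Nat.cast_nonneg (α := ℝ) m])
  have hterm : ∀ k ∈ Finset.range m, |(-x) ^ k / (k.factorial : ℝ)| ≤ x ^ ((m : ℝ) - 1) := by
    intro k hk
    have hk : (k : ℝ) ≤ m - 1 := by
      have : (k : ℝ) + 1 ≤ m := by exact_mod_cast Finset.mem_range.mp hk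
      linarith
    have hfac : (1 : ℝ) ≤ k.factorial := by exact_mod_cast k.factorial_pos
    calc |(-x) ^ k / (k.factorial : ℝ)| = x ^ k / k.factorial := by
          rw [abs_div, abs_pow, abs_neg, abs_of_pos hx0, Nat.abs_cast]
      _ ≤ x ^ k := div_le_self (by positivity) hfac
      _ = x ^ (k : ℝ) := (Real.rpow_natCast x k).symm
      _ ≤ x ^ ((m : ℝ) - 1) := Real.rpow_le_rpow_of_exponent_le hx hk
  have hsum : |truncExpPrev m (-x)| ≤ m * x ^ ((m : ℝ) - 1) := by
    unfold truncExpPrev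
    refine (Finset.abs_sum_le_sum_abs _ _).trans ?_
    simpa using Finset.sum_le_sum hterm
  calc |negExpRemainder m x| ≤ |Real.exp (-x)| + |truncExpPrev m (-x)| := abs_sub _ _
    _ ≤ x ^ ((m : ℝ) - 1) + m * x ^ ((m : ℝ) - 1) := by
      rw [abs_of_pos (Real.exp_pos _)]
      exact add_le_add hexp hsum
    _ = (m + 1) * x ^ ((m : ℝ) - 1) := by ring

section WeightedRemainder

variable (m : ℕ) (w : ℝ)

lemma norm_negExpRemainder_mul_rpow_le_of_le_one {x : ℝ} (hx0 : 0 < x) (hx1 : x ≤ 1) :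
    ‖negExpRemainder m x * x ^ w‖ ≤ 2 * x ^ ((m : ℝ) + w) := by
  rw [norm_mul, Real.norm_eq_abs, Real.norm_of_nonneg (Real.rpow_nonneg hx0.le w),
    Real.rpow_add hx0, Real.rpow_natCast, ← mul_assoc]
  exact mul_le_mul_of_nonneg_right (abs_negExpRemainder_le_of_le_one m hx0.le hx1)
    (Real.rpow_nonneg hx0.le w)

lemma norm_negExpRemainder_mul_rpow_le_of_one_le {x : ℝ} (hx : 1 ≤ x) :
    ‖negExpRemainder m x * x ^ w‖ ≤ (m + 1) * x ^ ((m : ℝ) - 1 + w) := by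
  have hx0 : 0 < x := one_pos.trans_le hx
  rw [norm_mul, Real.norm_eq_abs, Real.norm_of_nonneg (Real.rpow_nonneg hx0.le w),
    Real.rpow_add hx0, ← mul_assoc]
  exact mul_le_mul_of_nonneg_right (abs_negExpRemainder_le_of_one_le m hx)
    (Real.rpow_nonneg hx0.le w)

lemma continuousOn_negExpRemainder_mul_rpow :
    ContinuousOn (fun x => negExpRemainder m x * x ^ w) (Ioi 0) :=
  (continuous_negExpRemainder m).continuousOn.mul
    fun x hx => (Real.continuousAt_rpow_const x w (Or.inl hx.ne')).continuousWithinAt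

lemma integrableOn_negExpRemainder_mul_rpow (h0 : -1 < (m : ℝ) + w)
    (hinf : (m : ℝ) - 1 + w < -1) :
    IntegrableOn (fun x => negExpRemainder m x * x ^ w) (Ioi 0) := by
  rw [← Ioc_union_Ioi_eq_Ioi zero_le_one]
  refine IntegrableOn.union ?_ ?_
  · have hdom : IntegrableOn (fun x : ℝ => 2 * x ^ ((m : ℝ) + w)) (Ioc 0 1) :=
      ((intervalIntegral.intervalIntegrable_rpow' h0).1).const_mul 2
    refine hdom.mono' ((continuousOn_negExpRemainder_mul_rpow m w).mono
      Ioc_subset_Ioi_self |>.aestronglyMeasurable measurableSet_Ioc) ?_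
    filter_upwards [ae_restrict_mem measurableSet_Ioc] with x hx
    exact norm_negExpRemainder_mul_rpow_le_of_le_one m w hx.1 hx.2
  · have hdom : IntegrableOn (fun x : ℝ => (m + 1) * x ^ ((m : ℝ) - 1 + w)) (Ioi 1) :=
      (integrableOn_Ioi_rpow_of_lt hinf one_pos).const_mul _
    refine hdom.mono' ((continuousOn_negExpRemainder_mul_rpow m w).mono
      (Ioi_subset_Ioi zero_le_one) |>.aestronglyMeasurable measurableSet_Ioi) ?_
    filter_upwards [ae_restrict_mem measurableSet_Ioi] with x hx
    exact norm_negExpRemainder_mul_rpow_le_of_one_le m w (le_of_lt hx)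

lemma tendsto_negExpRemainder_mul_rpow_nhdsGT_zero (h : 0 < (m : ℝ) + w) :
    Tendsto (fun x => negExpRemainder m x * x ^ w) (𝓝[>] 0) (𝓝 0) := by
  have hdom : Tendsto (fun x : ℝ => 2 * x ^ ((m : ℝ) + w)) (𝓝[>] 0) (𝓝 0) := by
    simpa [Real.zero_rpow h.ne'] using
      ((Real.continuousAt_rpow_const 0 _ (Or.inr h.le)).tendsto.const_mul 2).mono_left
        nhdsWithin_le_nhds
  refine squeeze_zero_norm' ?_ hdom
  filter_upwards [Ioc_mem_nhdsGT zero_lt_one] with x hx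
  exact norm_negExpRemainder_mul_rpow_le_of_le_one m w hx.1 hx.2

lemma tendsto_negExpRemainder_mul_rpow_atTop (h : (m : ℝ) - 1 + w < 0) :
    Tendsto (fun x => negExpRemainder m x * x ^ w) atTop (𝓝 0) := by
  have hdom : Tendsto (fun x : ℝ => (m + 1) * x ^ ((m : ℝ) - 1 + w)) atTop (𝓝 0) := by
    simpa using (tendsto_rpow_neg_atTop (neg_pos.mpr h)).const_mul ((m : ℝ) + 1)
  refine squeeze_zero_norm' ?_ hdom
  filter_upwards [eventually_ge_atTop 1] with x hx
  exact norm_negExpRemainder_mul_rpow_le_of_one_le m w hx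

end WeightedRemainder

lemma integral_negExpRemainder_succ_mul_rpow {m : ℕ} {z : ℝ} (hmz : (m : ℝ) < z)
    (hzm : z < m + 1) :
    ∫ x in Ioi 0, negExpRemainder (m + 1) x * x ^ (-z - 1)
      = -(1 / z) * ∫ x in Ioi 0, negExpRemainder m x * x ^ (-z) := by
  have hz : z ≠ 0 := (lt_of_le_of_lt (Nat.cast_nonneg m) hmz).ne'
  have hv : ∀ x ∈ Ioi (0 : ℝ), HasDerivAt (fun y => -(1 / z) * y ^ (-z)) (x ^ (-z - 1)) x := by
    intro x hx
    rw [show x ^ (-z - 1) = -(1 / z) * (-z * x ^ (-z - 1)) by field_simp]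
    exact (Real.hasDerivAt_rpow_const (Or.inl hx.ne')).const_mul _
  have huv' := integrableOn_negExpRemainder_mul_rpow (m + 1) (-z - 1) (by push_cast; linarith)
    (by push_cast; linarith)
  have hu'v : IntegrableOn (fun x => -negExpRemainder m x * (-(1 / z) * x ^ (-z))) (Ioi 0) := by
    refine IntegrableOn.congr_fun ((integrableOn_negExpRemainder_mul_rpow m (-z) (by linarith)
      (by linarith)).const_mul (1 / z)) (fun x _ => ?_) measurableSet_Ioi
    ring
  have hzero : Tendsto (fun x => negExpRemainder (m + 1) x * (-(1 / z) * x ^ (-z))) (𝓝[>] 0)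
      (𝓝 0) := by
    simpa only [mul_left_comm, mul_zero] using
      (tendsto_negExpRemainder_mul_rpow_nhdsGT_zero (m + 1) (-z) (by push_cast; linarith)).const_mul
        (-(1 / z))
  have hinfty : Tendsto (fun x => negExpRemainder (m + 1) x * (-(1 / z) * x ^ (-z))) atTop
      (𝓝 0) := by
    simpa only [mul_left_comm, mul_zero] using
      (tendsto_negExpRemainder_mul_rpow_atTop (m + 1) (-z) (by push_cast; linarith)).const_mul
        (-(1 / z))
  have hparts := integral_Ioi_mul_deriv_eq_deriv_mul
    (fun x _ => hasDerivAt_negExpRemainder_succ m x) hv huv' hu'v hzero hinfty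
  have hrw (x : ℝ) : -negExpRemainder m x * (-(1 / z) * x ^ (-z))
      = 1 / z * (negExpRemainder m x * x ^ (-z)) := by ring
  simp only [hrw, integral_const_mul] at hparts
  linarith

/-- Integration-by-parts reduction: for non-integer `z > 0` with `n = ⌊z⌋`, both integrals
converge and
`∫₀^∞ (e^{-x} - e_n(-x)) x^{-z-1} dx = -(1/z) ∫₀^∞ (e^{-x} - e_{n-1}(-x)) x^{-z} dx`. -/
theorem integration_by_parts_reduction (z : ℝ) (hz : 0 < z) (hnint : ∀ m : ℤ, z ≠ (m : ℝ)) :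
    IntegrableOn (fun x : ℝ => (Real.exp (-x) - truncExp ⌊z⌋₊ (-x)) * x ^ (-z - 1))
      (Set.Ioi 0) ∧
    IntegrableOn (fun x : ℝ => (Real.exp (-x) - truncExpPrev ⌊z⌋₊ (-x)) * x ^ (-z))
      (Set.Ioi 0) ∧
    ∫ x in Set.Ioi (0 : ℝ), (Real.exp (-x) - truncExp ⌊z⌋₊ (-x)) * x ^ (-z - 1)
      = -(1 / z) *
        ∫ x in Set.Ioi (0 : ℝ), (Real.exp (-x) - truncExpPrev ⌊z⌋₊ (-x)) * x ^ (-z) := by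
  have hnz : (⌊z⌋₊ : ℝ) < z :=
    (Nat.floor_le hz.le).lt_of_ne fun h => hnint ⌊z⌋₊ (by exact_mod_cast h.symm)
  have hzn : z < ⌊z⌋₊ + 1 := Nat.lt_floor_add_one z
  exact ⟨integrableOn_negExpRemainder_mul_rpow (⌊z⌋₊ + 1) (-z - 1) (by push_cast; linarith)
      (by push_cast; linarith),
    integrableOn_negExpRemainder_mul_rpow ⌊z⌋₊ (-z) (by linarith) (by linarith),
    integral_negExpRemainder_succ_mul_rpow hnz hzn⟩
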